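/- Let Γ be a finite mixed graph without an oriented cycle. Then the twisted right-angled Artin group G_Γ is poly-free. -/

import Mathlib

/-- A mixed graph: a simplicial graph (given by a symmetric irreflexive adjacency
relation) together with a set `D` of oriented edges; an oriented edge is recorded as the
ordered pair `(o e, t e)` of its origin and terminus, it must be an edge of the graph,
and an edge carries at most one orientation. -/
structure MixedGraph (V : Type*) where
  /-- adjacency relation: `adj u v` iff `{u,v}` is an edge -/
  adj : V → V → Prop
  symm : ∀ u v, adj u v → adj v u
  loopless : ∀ v, ¬ adj v v
  /-- the set of oriented edges, as ordered pairs (origin, terminus) -/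
  D : Set (V × V)
  D_isEdge : ∀ e ∈ D, adj e.1 e.2
  D_antisymm : ∀ e ∈ D, (e.2, e.1) ∉ D

namespace MixedGraph

variable {V : Type*}

/-- The relators of the twisted right-angled Artin group of a mixed graph: a commutator
`u v u⁻¹ v⁻¹` for each unoriented edge `{u,v}`, and a Klein-bottle relator `a b a⁻¹ b`
for each oriented edge `[a, b⟩`. -/
def traagRels (Γ : MixedGraph V) : Set (FreeGroup V) :=
  {r | (∃ u v : V, Γ.adj u v ∧ (u, v) ∉ Γ.D ∧ (v, u) ∉ Γ.D ∧
          r = FreeGroup.of u * FreeGroup.of v * (FreeGroup.of u)⁻¹ * (FreeGroup.of v)⁻¹) ∨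
       (∃ a b : V, (a, b) ∈ Γ.D ∧
          r = FreeGroup.of a * FreeGroup.of b * (FreeGroup.of a)⁻¹ * FreeGroup.of b)}

/-- The twisted right-angled Artin group (TRAAG) based on a mixed graph `Γ`. -/
def TRAAG (Γ : MixedGraph V) : Type _ := PresentedGroup Γ.traagRels

instance (Γ : MixedGraph V) : Group (TRAAG Γ) := by unfold TRAAG; infer_instance

/-- The generator of the TRAAG corresponding to a vertex. -/
def gen (Γ : MixedGraph V) (v : V) : TRAAG Γ := PresentedGroup.of v

/-- `Γ` has an oriented cycle: a sequence `e₀, …, eₙ` of oriented edges with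
`t(eᵢ) = o(e_{i+1})` cyclically. -/
def HasOrientedCycle (Γ : MixedGraph V) : Prop :=
  ∃ (n : ℕ) (c : ZMod (n + 1) → V × V),
    (∀ i, c i ∈ Γ.D) ∧ ∀ i, (c i).2 = (c (i + 1)).1

/-- The full mixed subgraph of `Γ` spanned by a set `U` of vertices. -/
def induce (Γ : MixedGraph V) (U : Set V) : MixedGraph U where
  adj u v := Γ.adj u v
  symm u v h := Γ.symm u v h
  loopless v := Γ.loopless v
  D := {p | ((p.1 : V), (p.2 : V)) ∈ Γ.D}
  D_isEdge _ he := Γ.D_isEdge _ he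
  D_antisymm _ he := Γ.D_antisymm _ he

/-- A vertex `v` is a source if every edge containing `v` is either unoriented or
oriented with origin `v`, i.e. no oriented edge has terminus `v`. -/
def IsSource (Γ : MixedGraph V) (v : V) : Prop :=
  ∀ u : V, (u, v) ∉ Γ.D

/-- The link of a vertex: its set of neighbours. -/
def lk (Γ : MixedGraph V) (v : V) : Set V := {u | Γ.adj u v}

/-- The star of a vertex: its link together with the vertex itself. -/
def st (Γ : MixedGraph V) (v : V) : Set V := insert v (Γ.lk v)

end MixedGraph

/-- A group is free (of some rank). -/
def IsFreeGrp (G : Type*) [Group G] : Prop :=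
  ∃ S : Type, Nonempty (G ≃* FreeGroup S)

/-- A group `G` is poly-free if there is a finite chain
`{1} = G₀ ⊴ G₁ ⊴ ⋯ ⊴ Gₙ = G` of subgroups, each normal in the next, with each quotient
`G_{i+1}/G_i` a free group. -/
def PolyFree (G : Type*) [Group G] : Prop :=
  ∃ (n : ℕ) (s : ℕ → Subgroup G), s 0 = ⊥ ∧ s n = ⊤ ∧
    ∀ i < n, s i ≤ s (i + 1) ∧ ∃ h : ((s i).subgroupOf (s (i + 1))).Normal,
      @IsFreeGrp (↥(s (i + 1)) ⧸ (s i).subgroupOf (s (i + 1)))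
        (@QuotientGroup.Quotient.group _ _ _ h)

lemma IsFreeGrp.of_mulEquiv {G H : Type*} [Group G] [Group H] (e : G ≃* H)
    (hH : IsFreeGrp H) : IsFreeGrp G := by
  obtain ⟨S, ⟨f⟩⟩ := hH
  exact ⟨S, ⟨e.trans f⟩⟩

lemma polyFree_of_subsingleton (G : Type*) [Group G] [Subsingleton G] : PolyFree G := by
  refine ⟨0, fun _ => ⊥, rfl, ?_, fun i hi => absurd hi (by omega)⟩
  exact Subgroup.ext fun x => by simp [Subsingleton.elim x 1]

/-- Key plumbing: if `K ≤ L` are subgroups and there is a surjection `↥L →* H` with kernel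
`K.subgroupOf L` onto a free group `H`, then the pair `(K, L)` is a valid step of a
poly-free chain. -/
lemma polyfree_step {G H : Type*} [Group G] [Group H] {K L : Subgroup G} (f : ↥L →* H)
    (hf : Function.Surjective f) (hker : f.ker = K.subgroupOf L) (hfree : IsFreeGrp H) :
    ∃ h : (K.subgroupOf L).Normal,
      @IsFreeGrp (↥L ⧸ K.subgroupOf L) (@QuotientGroup.Quotient.group _ _ _ h) := by
  have h : (K.subgroupOf L).Normal := hker ▸ f.normal_ker
  refine ⟨h, ?_⟩
  haveI := h
  have e : ↥L ⧸ K.subgroupOf L ≃* H :=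
    (QuotientGroup.quotientMulEquivOfEq hker.symm).trans
      (QuotientGroup.quotientKerEquivOfSurjective f hf)
  exact IsFreeGrp.of_mulEquiv e hfree

lemma polyFree_of_surjective {G H : Type*} [Group G] [Group H] (π : G →* H)
    (hs : Function.Surjective π) (hker : IsFreeGrp π.ker) (hH : PolyFree H) : PolyFree G := by
  obtain ⟨n, s, hs0, hsn, hstep⟩ := hH
  refine ⟨n + 1, fun i => Nat.casesOn i ⊥ (fun j => (s j).comap π), rfl, ?_, ?_⟩
  · show (s n).comap π = ⊤
    rw [hsn, Subgroup.comap_top]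
  · intro i hi
    cases i with
    | zero =>
      refine ⟨bot_le, ?_⟩
      show ∃ h : ((⊥ : Subgroup G).subgroupOf ((s 0).comap π)).Normal, _
      have hK : (s 0).comap π = π.ker := by rw [hs0, ← MonoidHom.comap_bot]
      -- map from ↥((s 0).comap π) to FreeGroup S
      obtain ⟨S, ⟨e⟩⟩ := hker
      -- build hom: inclusion into ker then e
      let f : ↥((s 0).comap π) →* FreeGroup S :=
        e.toMonoidHom.comp ((MulEquiv.subgroupCongr hK).toMonoidHom)
      refine polyfree_step f ?_ ?_ ⟨S, ⟨MulEquiv.refl _⟩⟩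
      · exact e.surjective.comp (MulEquiv.subgroupCongr hK).surjective
      · ext x
        rw [MonoidHom.mem_ker, Subgroup.mem_subgroupOf, Subgroup.mem_bot]
        constructor
        · intro hx
          have h1 : (MulEquiv.subgroupCongr hK) x = 1 :=
            e.injective (by rw [map_one]; exact hx)
          exact congrArg Subtype.val h1
        · intro hx
          have h1 : (MulEquiv.subgroupCongr hK) x = 1 := by
            apply Subtype.ext; simpa using hx
          show e ((MulEquiv.subgroupCongr hK) x) = 1
          rw [h1, map_one]
    | succ j =>
      have hj : j < n := by omega
      obtain ⟨hle, hnorm, hfree⟩ := hstep j hj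
      refine ⟨Subgroup.comap_mono hle, ?_⟩
      haveI := hnorm
      -- build hom from ↥((s (j+1)).comap π) onto ↥(s (j+1)) ⧸ (s j).subgroupOf (s (j+1))
      let πL : ↥((s (j + 1)).comap π) →* ↥(s (j + 1)) :=
        (π.domRestrict ((s (j + 1)).comap π)).codRestrict (s (j + 1)) (fun x => x.2)
      let f := (QuotientGroup.mk' ((s j).subgroupOf (s (j + 1)))).comp πL
      refine polyfree_step f ?_ ?_ hfree
      · apply Function.Surjective.comp (QuotientGroup.mk'_surjective _)
        rintro ⟨y, hy⟩
        obtain ⟨g, hg⟩ := hs y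
        exact ⟨⟨g, by simp [Subgroup.mem_comap, hg, hy]⟩, Subtype.ext (by simpa [πL])⟩
      · ext x
        simp only [f, MonoidHom.mem_ker, MonoidHom.comp_apply, Subgroup.mem_subgroupOf]
        rw [← MonoidHom.mem_ker, QuotientGroup.ker_mk', Subgroup.mem_subgroupOf]
        simp [πL, Subgroup.mem_comap, MonoidHom.domRestrict_apply]
        exact Iff.rfl

open MixedGraph in
lemma exists_sink {V : Type*} [Finite V] [Nonempty V] (Γ : MixedGraph V)
    (h : ¬ Γ.HasOrientedCycle) : ∃ v : V, ∀ u, (v, u) ∉ Γ.D := by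
  by_contra hc
  push_neg at hc
  choose f hf using hc
  set g : ℕ → V := fun t => f^[t] (Classical.arbitrary V) with hg
  have hgD : ∀ t, (g t, g (t + 1)) ∈ Γ.D := by
    intro t
    have : g (t + 1) = f (g t) := Function.iterate_succ_apply' f t _
    rw [this]
    exact hf (g t)
  obtain ⟨a, b, hab, hgab⟩ := Finite.exists_ne_map_eq_of_infinite g
  obtain ⟨i, j, hij, hgij⟩ : ∃ i j, i < j ∧ g i = g j := by
    rcases Nat.lt_or_ge a b with hlt | hge
    · exact ⟨a, b, hlt, hgab⟩
    · exact ⟨b, a, lt_of_le_of_ne hge (Ne.symm hab), hgab.symm⟩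
  -- build an oriented cycle of length j - i
  apply h
  set n : ℕ := j - i - 1 with hn
  have hn1 : n + 1 = j - i := by omega
  haveI : NeZero (n + 1) := ⟨Nat.succ_ne_zero n⟩
  set g' : ZMod (n + 1) → V := fun k => g (i + k.val) with hg'
  refine ⟨n, fun k => (g' k, g' (k + 1)), ?_, fun k => rfl⟩
  intro k
  have hval : (k + 1).val = (k.val + 1) % (n + 1) := by
    conv_lhs => rw [← ZMod.natCast_zmod_val k]
    rw [show ((k.val : ZMod (n+1)) + 1) = ((k.val + 1 : ℕ) : ZMod (n+1)) by push_cast; ring]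
    exact ZMod.val_natCast _ _
  have key : g' (k + 1) = g (i + k.val + 1) := by
    rcases Nat.lt_or_ge (k.val + 1) (n + 1) with hlt | hge
    · have h2 : (k + 1).val = k.val + 1 := by rw [hval, Nat.mod_eq_of_lt hlt]
      simp only [hg', h2, Nat.add_assoc]
    · have hkn : k.val = n := by have := ZMod.val_lt k; omega
      have h2 : (k + 1).val = 0 := by rw [hval, hkn, Nat.mod_self]
      have hj : j = i + n + 1 := by omega
      simp only [hg', h2, Nat.add_zero]
      rw [hgij, hj, hkn]
  show (g' k, g' (k + 1)) ∈ Γ.D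
  rw [key]
  exact hgD (i + k.val)

lemma rel_one {α : Type*} {rels : Set (FreeGroup α)} {r : FreeGroup α} (hr : r ∈ rels) :
    PresentedGroup.mk rels r = 1 :=
  (QuotientGroup.eq_one_iff _).2 (Subgroup.subset_normalClosure hr)

lemma of_comm_rel {α : Type*} {rels : Set (FreeGroup α)} {u w : α}
    (h : FreeGroup.of u * FreeGroup.of w * (FreeGroup.of u)⁻¹ * (FreeGroup.of w)⁻¹ ∈ rels) :
    (PresentedGroup.of u : PresentedGroup rels) * PresentedGroup.of w *
      (PresentedGroup.of u)⁻¹ = PresentedGroup.of w := by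
  have h1 := rel_one h
  rw [map_mul, map_mul, map_mul, map_inv, map_inv] at h1
  exact mul_inv_eq_one.1 h1

lemma of_klein_rel {α : Type*} {rels : Set (FreeGroup α)} {u w : α}
    (h : FreeGroup.of u * FreeGroup.of w * (FreeGroup.of u)⁻¹ * FreeGroup.of w ∈ rels) :
    (PresentedGroup.of u : PresentedGroup rels) * PresentedGroup.of w *
      (PresentedGroup.of u)⁻¹ = (PresentedGroup.of w)⁻¹ := by
  have h1 := rel_one h
  rw [map_mul, map_mul, map_mul, map_inv] at h1
  exact eq_inv_of_mul_eq_one_left h1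

namespace TraagDecomp

open MixedGraph SemidirectProduct

variable {V : Type} (Γ : MixedGraph V) (v : V)

/-- the TRAAG of the graph with `v` removed -/
abbrev Gpr : Type := PresentedGroup (Γ.induce ({v}ᶜ : Set V)).traagRels
/-- the TRAAG of `Γ` itself -/
abbrev Gbig : Type := PresentedGroup Γ.traagRels

open scoped Classical in
/-- sign of a generator: `-1` iff there is an oriented edge from it to `v`. -/
noncomputable def sgn : ↥({v}ᶜ : Set V) → ℤˣ :=
  fun u => if ((u : V), v) ∈ Γ.D then -1 else 1

/-- The sign character `G' →* ℤˣ`. -/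
noncomputable def eps : Gpr Γ v →* ℤˣ :=
  PresentedGroup.toGroup (f := sgn Γ v) (by
    rintro r (⟨u, w, hadj, h1, h2, rfl⟩ | ⟨a, b, hD, rfl⟩) <;>
      simp only [map_mul, map_inv, FreeGroup.lift_apply_of]
    · rcases Int.units_eq_one_or (sgn Γ v u) with h | h <;>
        rcases Int.units_eq_one_or (sgn Γ v w) with h' | h' <;> simp [h, h']
    · rcases Int.units_eq_one_or (sgn Γ v a) with h | h <;>
        rcases Int.units_eq_one_or (sgn Γ v b) with h' | h' <;> simp [h, h'])

/-- The inclusion homomorphism `G' →* GΓ`. -/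
noncomputable def incl : Gpr Γ v →* Gbig Γ :=
  PresentedGroup.toGroup (f := fun u : ↥({v}ᶜ : Set V) => PresentedGroup.of (rels := Γ.traagRels) (u : V)) (by
    rintro r (⟨u, w, hadj, h1, h2, rfl⟩ | ⟨a, b, hD, rfl⟩) <;>
      simp only [map_mul, map_inv, FreeGroup.lift_apply_of]
    · exact mul_inv_eq_one.1 (by
        have := rel_one (rels := Γ.traagRels) (Or.inl ⟨(u : V), (w : V), hadj, h1, h2, rfl⟩)
        rw [map_mul, map_mul, map_mul, map_inv, map_inv] at this
        exact this)
    · have := rel_one (rels := Γ.traagRels) (Or.inr ⟨(a : V), (b : V), hD, rfl⟩)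
      rw [map_mul, map_mul, map_mul, map_inv] at this
      exact this)

@[simp] lemma incl_of (u : ↥({v}ᶜ : Set V)) :
    incl Γ v (PresentedGroup.of u) = PresentedGroup.of (rels := Γ.traagRels) (u : V) :=
  rfl

@[simp] lemma eps_of (u : ↥({v}ᶜ : Set V)) : eps Γ v (PresentedGroup.of u) = sgn Γ v u :=
  PresentedGroup.toGroup.of _

/-- The generator of `GΓ` corresponding to the sink `v`. -/
noncomputable def w0 : Gbig Γ := PresentedGroup.of v

lemma units_val_sq (e : ℤˣ) : (e : ℤ) * (e : ℤ) = 1 := by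
  rw [← Units.val_mul, Int.units_mul_self e, Units.val_one]

lemma units_inv_self (e : ℤˣ) : e⁻¹ = e := inv_eq_of_mul_eq_one_right (Int.units_mul_self e)

/-- The subgroup of elements of `G'` that conjugate `w0` to a signed power of itself. -/
noncomputable def A' : Subgroup (Gpr Γ v) where
  carrier := {g | incl Γ v g * w0 Γ v * (incl Γ v g)⁻¹ = w0 Γ v ^ ((eps Γ v g : ℤˣ) : ℤ)}
  one_mem' := by simp
  mul_mem' := by
    intro a b ha hb
    simp only [Set.mem_setOf_eq] at ha hb ⊢
    rw [map_mul, mul_inv_rev]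
    calc incl Γ v a * incl Γ v b * w0 Γ v * ((incl Γ v b)⁻¹ * (incl Γ v a)⁻¹)
        = incl Γ v a * (incl Γ v b * w0 Γ v * (incl Γ v b)⁻¹) * (incl Γ v a)⁻¹ := by group
      _ = incl Γ v a * w0 Γ v ^ ((eps Γ v b : ℤˣ) : ℤ) * (incl Γ v a)⁻¹ := by rw [hb]
      _ = (incl Γ v a * w0 Γ v * (incl Γ v a)⁻¹) ^ ((eps Γ v b : ℤˣ) : ℤ) := by rw [conj_zpow]
      _ = (w0 Γ v ^ ((eps Γ v a : ℤˣ) : ℤ)) ^ ((eps Γ v b : ℤˣ) : ℤ) := by rw [ha]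
      _ = w0 Γ v ^ ((eps Γ v (a * b) : ℤˣ) : ℤ) := by
          rw [← zpow_mul]
          congr 1
          rw [map_mul, Units.val_mul]
  inv_mem' := by
    intro a ha
    simp only [Set.mem_setOf_eq] at ha ⊢
    have key : incl Γ v a * w0 Γ v ^ ((eps Γ v a : ℤˣ) : ℤ) * (incl Γ v a)⁻¹ = w0 Γ v := by
      rw [← conj_zpow, ha, ← zpow_mul, units_val_sq, zpow_one]
    rw [map_inv, map_inv, inv_inv, units_inv_self]
    calc (incl Γ v a)⁻¹ * w0 Γ v * incl Γ v a
        = (incl Γ v a)⁻¹ * (incl Γ v a * w0 Γ v ^ ((eps Γ v a : ℤˣ) : ℤ) * (incl Γ v a)⁻¹) *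
          incl Γ v a := by rw [key]
      _ = w0 Γ v ^ ((eps Γ v a : ℤˣ) : ℤ) := by group

lemma mem_A' {g : Gpr Γ v} :
    g ∈ A' Γ v ↔ incl Γ v g * w0 Γ v * (incl Γ v g)⁻¹ = w0 Γ v ^ ((eps Γ v g : ℤˣ) : ℤ) :=
  Iff.rfl

/-- Every neighbour of the sink `v` lies in `A'`. -/
lemma of_mem_A' (hv : ∀ u, (v, u) ∉ Γ.D) (u : ↥({v}ᶜ : Set V)) (hadj : Γ.adj (u : V) v) :
    (PresentedGroup.of u : Gpr Γ v) ∈ A' Γ v := by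
  rw [mem_A', incl_of, eps_of, w0]
  by_cases hD : ((u : V), v) ∈ Γ.D
  · have hsgn : sgn Γ v u = -1 := if_pos hD
    rw [hsgn]
    have := of_klein_rel (rels := Γ.traagRels) (Or.inr ⟨(u : V), v, hD, rfl⟩)
    rw [this]
    norm_num
  · have hsgn : sgn Γ v u = 1 := if_neg hD
    rw [hsgn]
    have := of_comm_rel (rels := Γ.traagRels) (Or.inl ⟨(u : V), v, hadj, hD, hv _, rfl⟩)
    rw [this]
    norm_num

/-- The coset space. -/
abbrev SS : Type := Gpr Γ v ⧸ A' Γ v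

noncomputable def rr : SS Γ v → Gpr Γ v := Quotient.out

lemma mk_rr (x : SS Γ v) : QuotientGroup.mk (rr Γ v x) = x := QuotientGroup.out_eq' x

noncomputable def mulS (h : Gpr Γ v) (x : SS Γ v) : SS Γ v := QuotientGroup.mk (h * rr Γ v x)

lemma mulS_mk (h g : Gpr Γ v) :
    mulS Γ v h (QuotientGroup.mk g) = QuotientGroup.mk (h * g) := by
  show QuotientGroup.mk (h * rr Γ v (QuotientGroup.mk g)) = QuotientGroup.mk (h * g)
  rw [QuotientGroup.eq]
  have h1 : (rr Γ v (QuotientGroup.mk g))⁻¹ * g ∈ A' Γ v :=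
    QuotientGroup.eq.1 (mk_rr Γ v (QuotientGroup.mk g))
  have h2 : (h * rr Γ v (QuotientGroup.mk g))⁻¹ * (h * g)
      = (rr Γ v (QuotientGroup.mk g))⁻¹ * g := by group
  rw [h2]
  exact h1

lemma mulS_mulS (g h : Gpr Γ v) (x : SS Γ v) :
    mulS Γ v g (mulS Γ v h x) = mulS Γ v (g * h) x := by
  show mulS Γ v g (QuotientGroup.mk (h * rr Γ v x)) = QuotientGroup.mk ((g * h) * rr Γ v x)
  rw [mulS_mk, mul_assoc]

lemma mulS_one (x : SS Γ v) : mulS Γ v 1 x = x := by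
  show QuotientGroup.mk (1 * rr Γ v x) = x
  rw [one_mul, mk_rr]

/-- The sign cocycle. -/
noncomputable def sigma (h : Gpr Γ v) (x : SS Γ v) : ℤˣ :=
  eps Γ v ((rr Γ v (mulS Γ v h x))⁻¹ * h * rr Γ v x)

lemma sigma_cocycle (g h : Gpr Γ v) (x : SS Γ v) :
    sigma Γ v (g * h) x = sigma Γ v g (mulS Γ v h x) * sigma Γ v h x := by
  have h1 : (rr Γ v (mulS Γ v (g * h) x))⁻¹ * (g * h) * rr Γ v x
      = ((rr Γ v (mulS Γ v g (mulS Γ v h x)))⁻¹ * g * rr Γ v (mulS Γ v h x)) *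
        ((rr Γ v (mulS Γ v h x))⁻¹ * h * rr Γ v x) := by
    rw [mulS_mulS]
    group
  unfold sigma
  rw [h1, map_mul]

lemma sigma_one (x : SS Γ v) : sigma Γ v 1 x = 1 := by
  unfold sigma
  rw [mulS_one, mul_one, inv_mul_cancel, map_one]

/-- The underlying homomorphism of the twisted action of `Gpr` on the free group on `SS`. -/
noncomputable def phf (h : Gpr Γ v) : FreeGroup (SS Γ v) →* FreeGroup (SS Γ v) :=
  FreeGroup.lift fun x => (FreeGroup.of (mulS Γ v h x)) ^ ((sigma Γ v h x : ℤˣ) : ℤ)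

@[simp] lemma phf_of (h : Gpr Γ v) (x : SS Γ v) :
    phf Γ v h (FreeGroup.of x) = (FreeGroup.of (mulS Γ v h x)) ^ ((sigma Γ v h x : ℤˣ) : ℤ) :=
  FreeGroup.lift_apply_of

lemma phf_comp (g h : Gpr Γ v) : (phf Γ v g).comp (phf Γ v h) = phf Γ v (g * h) := by
  apply FreeGroup.ext_hom
  intro x
  simp only [MonoidHom.comp_apply, phf_of, map_zpow, phf_of]
  rw [← zpow_mul, mulS_mulS, sigma_cocycle, Units.val_mul]

lemma phf_one : phf Γ v 1 = MonoidHom.id _ := by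
  apply FreeGroup.ext_hom
  intro x
  simp [phf_of, mulS_one, sigma_one]

/-- The twisted action as a `MulEquiv`. -/
noncomputable def alphaE (h : Gpr Γ v) : FreeGroup (SS Γ v) ≃* FreeGroup (SS Γ v) :=
  MonoidHom.toMulEquiv (phf Γ v h) (phf Γ v h⁻¹)
    (by rw [phf_comp, inv_mul_cancel, phf_one])
    (by rw [phf_comp, mul_inv_cancel, phf_one])

/-- The action homomorphism `Gpr →* MulAut (FreeGroup SS)`. -/
noncomputable def alpha : Gpr Γ v →* MulAut (FreeGroup (SS Γ v)) where
  toFun := alphaE Γ v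
  map_one' := by
    ext x
    show phf Γ v 1 x = x
    rw [phf_one]
    rfl
  map_mul' g h := by
    ext x
    show phf Γ v (g * h) x = phf Γ v g (phf Γ v h x)
    rw [← phf_comp]
    rfl

lemma alpha_apply (h : Gpr Γ v) (f : FreeGroup (SS Γ v)) :
    alpha Γ v h f = phf Γ v h f := rfl

/-- base point of the coset space -/
noncomputable def x0 : SS Γ v := QuotientGroup.mk 1

lemma rr_x0_mem : rr Γ v (x0 Γ v) ∈ A' Γ v := by
  have h1 : QuotientGroup.mk (rr Γ v (x0 Γ v)) = QuotientGroup.mk (1 : Gpr Γ v) :=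
    mk_rr Γ v (x0 Γ v)
  have h2 := QuotientGroup.eq.1 h1
  rw [mul_one] at h2
  exact (Subgroup.inv_mem_iff _).1 h2

/-- base sign -/
noncomputable def s0 : ℤˣ := eps Γ v (rr Γ v (x0 Γ v))

/-- the distinguished element of the free group mapping to `w0`. -/
noncomputable def c0 : FreeGroup (SS Γ v) := (FreeGroup.of (x0 Γ v)) ^ ((s0 Γ v : ℤˣ) : ℤ)

lemma key_alpha {g : Gpr Γ v} (hg : g ∈ A' Γ v) :
    alpha Γ v g (c0 Γ v) = c0 Γ v ^ ((eps Γ v g : ℤˣ) : ℤ) := by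
  have hm : mulS Γ v g (x0 Γ v) = x0 Γ v := by
    show QuotientGroup.mk (g * rr Γ v (x0 Γ v)) = QuotientGroup.mk (1 : Gpr Γ v)
    rw [QuotientGroup.eq, mul_one]
    exact (Subgroup.inv_mem_iff _).2 (Subgroup.mul_mem _ hg (rr_x0_mem Γ v))
  have hs : sigma Γ v g (x0 Γ v) = eps Γ v g := by
    unfold sigma
    rw [hm, map_mul, map_mul, map_inv]
    rcases Int.units_eq_one_or (eps Γ v (rr Γ v (x0 Γ v))) with h | h <;> rw [h] <;>
      rcases Int.units_eq_one_or (eps Γ v g) with h' | h' <;> rw [h'] <;> norm_num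
  rw [alpha_apply, c0, map_zpow, phf_of, hm, hs, ← zpow_mul, ← zpow_mul, mul_comm]

/-- The homomorphism from the free group to `Gbig`. -/
noncomputable def Psf : FreeGroup (SS Γ v) →* Gbig Γ :=
  FreeGroup.lift fun x => incl Γ v (rr Γ v x) * w0 Γ v * (incl Γ v (rr Γ v x))⁻¹

@[simp] lemma Psf_of (x : SS Γ v) :
    Psf Γ v (FreeGroup.of x) = incl Γ v (rr Γ v x) * w0 Γ v * (incl Γ v (rr Γ v x))⁻¹ :=
  FreeGroup.lift_apply_of

lemma compat (h : Gpr Γ v) :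
    (Psf Γ v).comp ((alpha Γ v h)).toMonoidHom
      = (MulAut.conj (incl Γ v h)).toMonoidHom.comp (Psf Γ v) := by
  apply FreeGroup.ext_hom
  intro x
  simp only [MonoidHom.comp_apply, MulEquiv.coe_toMonoidHom, MulAut.conj_apply]
  rw [alpha_apply, phf_of, map_zpow, Psf_of, Psf_of]
  have ha : (rr Γ v (mulS Γ v h x))⁻¹ * (h * rr Γ v x) ∈ A' Γ v := by
    have h1 : QuotientGroup.mk (rr Γ v (mulS Γ v h x))
        = QuotientGroup.mk (h * rr Γ v x) := mk_rr Γ v (mulS Γ v h x)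
    exact QuotientGroup.eq.1 h1
  have hc := (mem_A' Γ v).1 ha
  have hsig : eps Γ v ((rr Γ v (mulS Γ v h x))⁻¹ * (h * rr Γ v x)) = sigma Γ v h x := by
    unfold sigma
    rw [mul_assoc]
  rw [hsig] at hc
  calc (incl Γ v (rr Γ v (mulS Γ v h x)) * w0 Γ v * (incl Γ v (rr Γ v (mulS Γ v h x)))⁻¹) ^
        ((sigma Γ v h x : ℤˣ) : ℤ)
      = incl Γ v (rr Γ v (mulS Γ v h x)) * w0 Γ v ^ ((sigma Γ v h x : ℤˣ) : ℤ) *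
        (incl Γ v (rr Γ v (mulS Γ v h x)))⁻¹ := conj_zpow
    _ = incl Γ v (rr Γ v (mulS Γ v h x)) *
        (incl Γ v ((rr Γ v (mulS Γ v h x))⁻¹ * (h * rr Γ v x)) * w0 Γ v *
          (incl Γ v ((rr Γ v (mulS Γ v h x))⁻¹ * (h * rr Γ v x)))⁻¹) *
        (incl Γ v (rr Γ v (mulS Γ v h x)))⁻¹ := by rw [hc]
    _ = incl Γ v h * (incl Γ v (rr Γ v x) * w0 Γ v * (incl Γ v (rr Γ v x))⁻¹) *
        (incl Γ v h)⁻¹ := by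
          rw [map_mul, map_inv, map_mul]
          group

/-- The homomorphism `P →* Gbig`. -/
noncomputable def Psi : (FreeGroup (SS Γ v) ⋊[alpha Γ v] Gpr Γ v) →* Gbig Γ :=
  SemidirectProduct.lift (Psf Γ v) (incl Γ v) (compat Γ v)

lemma inr_conj_inl (g : Gpr Γ v) (n : FreeGroup (SS Γ v)) :
    (inr g : FreeGroup (SS Γ v) ⋊[alpha Γ v] Gpr Γ v) * inl n * (inr g)⁻¹
      = inl (alpha Γ v g n) := by
  rw [← map_inv]
  exact (inl_aut g n).symm

open scoped Classical in
/-- the generator images for `Phi`. -/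
noncomputable def fPhi : V → FreeGroup (SS Γ v) ⋊[alpha Γ v] Gpr Γ v := fun u =>
  if h : u = v then inl (c0 Γ v)
  else inr (PresentedGroup.of (⟨u, Set.mem_compl_singleton_iff.mpr h⟩ : ↥({v}ᶜ : Set V)))

lemma fPhi_v : fPhi Γ v v = inl (c0 Γ v) := dif_pos rfl

lemma fPhi_ne {u : V} (h : u ≠ v) :
    fPhi Γ v u = inr (PresentedGroup.of (⟨u, Set.mem_compl_singleton_iff.mpr h⟩ :
      ↥({v}ᶜ : Set V))) := dif_neg h

lemma fPhi_coe (u : ↥({v}ᶜ : Set V)) :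
    fPhi Γ v (u : V) = inr (PresentedGroup.of u) := by
  rw [fPhi_ne Γ v (Set.mem_compl_singleton_iff.mp u.2), Subtype.coe_eta]

/-- conjugation of `inl (c0)` by a generator in the link of `v`. -/
lemma gen_conj_c0 (hv : ∀ u, (v, u) ∉ Γ.D) (u : ↥({v}ᶜ : Set V)) (hadj : Γ.adj (u : V) v) :
    (inr (PresentedGroup.of u) : FreeGroup (SS Γ v) ⋊[alpha Γ v] Gpr Γ v) * inl (c0 Γ v) *
      (inr (PresentedGroup.of u))⁻¹ = inl (c0 Γ v ^ ((sgn Γ v u : ℤˣ) : ℤ)) := by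
  rw [inr_conj_inl, key_alpha Γ v (of_mem_A' Γ v hv u hadj), eps_of]

/-- The homomorphism `Gbig →* P`. -/
noncomputable def Phi (hv : ∀ u, (v, u) ∉ Γ.D) :
    Gbig Γ →* FreeGroup (SS Γ v) ⋊[alpha Γ v] Gpr Γ v :=
  PresentedGroup.toGroup (f := fPhi Γ v) (by
    rintro r (⟨u, w, hadj, h1, h2, rfl⟩ | ⟨a, b, hD, rfl⟩) <;>
      simp only [map_mul, map_inv, FreeGroup.lift_apply_of]
    · -- commutation relator
      by_cases hu : u = v
      · by_cases hw : w = v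
        · rw [hu, hw] at hadj
          exact absurd hadj (Γ.loopless v)
        · set w' : ↥({v}ᶜ : Set V) := ⟨w, Set.mem_compl_singleton_iff.mpr hw⟩
          rw [hu, fPhi_v, fPhi_ne Γ v hw]
          rw [hu] at hadj h2
          have hsgn : sgn Γ v w' = 1 := if_neg h2
          have hcomm := gen_conj_c0 Γ v hv w' (Γ.symm _ _ hadj)
          rw [hsgn] at hcomm
          norm_num at hcomm
          have h3 : (inl (c0 Γ v) : FreeGroup (SS Γ v) ⋊[alpha Γ v] Gpr Γ v) *
              inr (PresentedGroup.of w')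
              = inr (PresentedGroup.of w') * inl (c0 Γ v) := by
            conv_lhs => rw [← hcomm]
            group
          rw [h3]
          group
          rw [zpow_neg_one]
          exact mul_inv_cancel _
      · by_cases hw : w = v
        · set u' : ↥({v}ᶜ : Set V) := ⟨u, Set.mem_compl_singleton_iff.mpr hu⟩
          rw [hw, fPhi_v, fPhi_ne Γ v hu]
          rw [hw] at hadj h1
          have hsgn : sgn Γ v u' = 1 := if_neg h1
          have hcomm := gen_conj_c0 Γ v hv u' hadj
          rw [hsgn] at hcomm
          norm_num at hcomm
          rw [hcomm]
          group
        · rw [fPhi_ne Γ v hu, fPhi_ne Γ v hw]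
          set u' : ↥({v}ᶜ : Set V) := ⟨u, Set.mem_compl_singleton_iff.mpr hu⟩
          set w' : ↥({v}ᶜ : Set V) := ⟨w, Set.mem_compl_singleton_iff.mpr hw⟩
          have hrel : (PresentedGroup.of u' : Gpr Γ v) * PresentedGroup.of w' *
              (PresentedGroup.of u')⁻¹ * (PresentedGroup.of w')⁻¹ = 1 := by
            have h4 := rel_one (rels := (Γ.induce ({v}ᶜ : Set V)).traagRels)
              (Or.inl ⟨u', w', hadj, h1, h2, rfl⟩)
            rw [map_mul, map_mul, map_mul, map_inv, map_inv] at h4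
            exact h4
          rw [← map_inv, ← map_inv, ← map_mul, ← map_mul, ← map_mul, hrel, map_one]
    · -- Klein relator
      by_cases ha : a = v
      · exact absurd hD (ha ▸ hv b)
      · by_cases hb : b = v
        · set a' : ↥({v}ᶜ : Set V) := ⟨a, Set.mem_compl_singleton_iff.mpr ha⟩
          rw [hb, fPhi_v, fPhi_ne Γ v ha]
          rw [hb] at hD
          have hsgn : sgn Γ v a' = -1 := if_pos hD
          have hcomm := gen_conj_c0 Γ v hv a' (Γ.D_isEdge _ hD)
          rw [hsgn] at hcomm
          rw [hcomm]
          norm_num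
        · rw [fPhi_ne Γ v ha, fPhi_ne Γ v hb]
          set a' : ↥({v}ᶜ : Set V) := ⟨a, Set.mem_compl_singleton_iff.mpr ha⟩
          set b' : ↥({v}ᶜ : Set V) := ⟨b, Set.mem_compl_singleton_iff.mpr hb⟩
          have hrel : (PresentedGroup.of a' : Gpr Γ v) * PresentedGroup.of b' *
              (PresentedGroup.of a')⁻¹ * PresentedGroup.of b' = 1 := by
            have h4 := rel_one (rels := (Γ.induce ({v}ᶜ : Set V)).traagRels)
              (Or.inr ⟨a', b', hD, rfl⟩)
            rw [map_mul, map_mul, map_mul, map_inv] at h4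
            exact h4
          rw [← map_inv, ← map_mul, ← map_mul, ← map_mul, hrel, map_one])

@[simp] lemma Phi_of (hv : ∀ u, (v, u) ∉ Γ.D) (u : V) :
    Phi Γ v hv (PresentedGroup.of u) = fPhi Γ v u :=
  PresentedGroup.toGroup.of _

variable (hv : ∀ u, (v, u) ∉ Γ.D)

lemma Phi_comp_incl : (Phi Γ v hv).comp (incl Γ v) = inr := by
  apply PresentedGroup.ext
  intro u
  rw [MonoidHom.comp_apply, incl_of, Phi_of, fPhi_coe]

lemma Phi_w0 : Phi Γ v hv (w0 Γ v) = inl (c0 Γ v) := by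
  rw [w0, Phi_of, fPhi_v]

lemma mulS_rr_x0 (x : SS Γ v) : mulS Γ v (rr Γ v x) (x0 Γ v) = x := by
  show QuotientGroup.mk (rr Γ v x * rr Γ v (x0 Γ v)) = x
  have h1 : (QuotientGroup.mk (rr Γ v x * rr Γ v (x0 Γ v)) : SS Γ v)
      = QuotientGroup.mk (rr Γ v x) := by
    rw [QuotientGroup.eq]
    have h2 : (rr Γ v x * rr Γ v (x0 Γ v))⁻¹ * rr Γ v x = (rr Γ v (x0 Γ v))⁻¹ := by group
    rw [h2]
    exact (Subgroup.inv_mem_iff _).2 (rr_x0_mem Γ v)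
  rw [h1, mk_rr]

lemma alpha_rr_c0 (x : SS Γ v) : alpha Γ v (rr Γ v x) (c0 Γ v) = FreeGroup.of x := by
  have hs : sigma Γ v (rr Γ v x) (x0 Γ v) = s0 Γ v := by
    unfold sigma
    rw [mulS_rr_x0]
    have h2 : (rr Γ v x)⁻¹ * rr Γ v x * rr Γ v (x0 Γ v) = rr Γ v (x0 Γ v) := by group
    rw [h2]
    rfl
  rw [alpha_apply, c0, map_zpow, phf_of, mulS_rr_x0, hs, ← zpow_mul, units_val_sq, zpow_one]

lemma Phi_comp_Psi : (Phi Γ v hv).comp (Psi Γ v) = MonoidHom.id _ := by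
  apply SemidirectProduct.hom_ext
  · apply FreeGroup.ext_hom
    intro x
    simp only [MonoidHom.comp_apply, MonoidHom.id_apply]
    rw [show Psi Γ v (inl (FreeGroup.of x)) = Psf Γ v (FreeGroup.of x) from lift_inl _ _ _ _,
      Psf_of, map_mul, map_mul, map_inv]
    rw [show Phi Γ v hv (incl Γ v (rr Γ v x)) = inr (rr Γ v x) from
      DFunLike.congr_fun (Phi_comp_incl Γ v hv) (rr Γ v x), Phi_w0]
    rw [inr_conj_inl, alpha_rr_c0]
  · apply PresentedGroup.ext
    intro u
    simp only [MonoidHom.comp_apply, MonoidHom.id_apply]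
    rw [show Psi Γ v (inr (PresentedGroup.of u)) = incl Γ v (PresentedGroup.of u) from
      lift_inr _ _ _ _]
    rw [incl_of]
    rw [Phi_of, fPhi_coe]

lemma Psi_comp_Phi : (Psi Γ v).comp (Phi Γ v hv) = MonoidHom.id _ := by
  apply PresentedGroup.ext
  intro u
  simp only [MonoidHom.comp_apply, MonoidHom.id_apply, Phi_of]
  by_cases hu : u = v
  · rw [hu, fPhi_v]
    rw [show Psi Γ v (inl (c0 Γ v)) = Psf Γ v (c0 Γ v) from lift_inl _ _ _ _]
    rw [c0, map_zpow, Psf_of, (mem_A' Γ v).1 (rr_x0_mem Γ v), ← zpow_mul,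
      show eps Γ v (rr Γ v (x0 Γ v)) = s0 Γ v from rfl, units_val_sq, zpow_one]
    rfl
  · rw [fPhi_ne Γ v hu]
    rw [show Psi Γ v (inr (PresentedGroup.of _)) = incl Γ v (PresentedGroup.of _) from
      lift_inr _ _ _ _]
    rw [incl_of]

/-- The retraction `Gbig →* Gpr` with free kernel. -/
noncomputable def proj : Gbig Γ →* Gpr Γ v := rightHom.comp (Phi Γ v hv)

lemma proj_surjective : Function.Surjective (proj Γ v hv) := by
  apply Function.Surjective.comp rightHom_surjective
  intro p
  exact ⟨Psi Γ v p, DFunLike.congr_fun (Phi_comp_Psi Γ v hv) p⟩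

/-- The kernel of the retraction is free. -/
noncomputable def kerEquiv : (proj Γ v hv).ker ≃* FreeGroup (SS Γ v) where
  toFun g := (Phi Γ v hv (g : Gbig Γ)).left
  invFun f := ⟨Psi Γ v (inl f), by
    have h1 : Phi Γ v hv (Psi Γ v (inl f)) = inl f :=
      DFunLike.congr_fun (Phi_comp_Psi Γ v hv) _
    show rightHom (Phi Γ v hv (Psi Γ v (inl f))) = 1
    rw [h1, rightHom_inl]⟩
  left_inv g := by
    apply Subtype.ext
    have hr : (Phi Γ v hv (g : Gbig Γ)).right = 1 := MonoidHom.mem_ker.mp g.2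
    have h1 : inl ((Phi Γ v hv (g : Gbig Γ)).left) = Phi Γ v hv (g : Gbig Γ) := by
      ext
      · rfl
      · exact hr.symm
    show Psi Γ v (inl ((Phi Γ v hv (g : Gbig Γ)).left)) = (g : Gbig Γ)
    rw [h1]
    exact DFunLike.congr_fun (Psi_comp_Phi Γ v hv) _
  right_inv f := by
    show (Phi Γ v hv (Psi Γ v (inl f))).left = f
    have h1 : Phi Γ v hv (Psi Γ v (inl f)) = inl f :=
      DFunLike.congr_fun (Phi_comp_Psi Γ v hv) _
    rw [h1]
    rfl
  map_mul' a b := by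
    show (Phi Γ v hv ((a : Gbig Γ) * (b : Gbig Γ))).left = _
    rw [map_mul, mul_left]
    have hr : (Phi Γ v hv (a : Gbig Γ)).right = 1 := MonoidHom.mem_ker.mp a.2
    rw [hr, map_one]
    rfl

end TraagDecomp


lemma traag_trivial {V : Type} [IsEmpty V] (Γ : MixedGraph V) :
    PolyFree (PresentedGroup Γ.traagRels) := by
  haveI : Subsingleton (FreeGroup V) := ⟨fun a b => by
    have h1 : ∀ x : FreeGroup V, x = 1 := fun x =>
      FreeGroup.induction_on (C := fun y => y = 1) x rfl (fun z => isEmptyElim z)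
        (fun z _ => isEmptyElim z) (fun y z hy hz => by rw [hy, hz, one_mul])
    rw [h1 a, h1 b]⟩
  haveI : Subsingleton (PresentedGroup Γ.traagRels) :=
    (PresentedGroup.mk_surjective Γ.traagRels).subsingleton
  exact polyFree_of_subsingleton _

lemma traag_polyfree_aux : ∀ (n : ℕ) (V : Type) (_ : Finite V) (Γ : MixedGraph V),
    Nat.card V ≤ n → ¬ Γ.HasOrientedCycle → PolyFree (PresentedGroup Γ.traagRels) := by
  intro n
  induction n with
  | zero =>
    intro V hF Γ hcard _
    haveI := hF
    haveI : IsEmpty V := by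
      rcases Nat.card_eq_zero.mp (Nat.le_zero.mp hcard) with h | h
      · exact h
      · exact absurd h (by rwa [not_infinite_iff_finite])
    exact traag_trivial Γ
  | succ n ih =>
    intro V hF Γ hcard hcyc
    haveI := hF
    rcases isEmpty_or_nonempty V with hE | hNE
    · exact traag_trivial Γ
    · obtain ⟨v, hv⟩ := exists_sink Γ hcyc
      haveI : Finite ↥({v}ᶜ : Set V) := Subtype.finite
      have hcard' : Nat.card ↥({v}ᶜ : Set V) ≤ n := by
        have h1 : ({v}ᶜ : Set V).ncard < (Set.univ : Set V).ncard := by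
          apply Set.ncard_lt_ncard _ Set.finite_univ
          constructor
          · exact Set.subset_univ _
          · intro hsub
            exact (hsub (Set.mem_univ v)) rfl
        rw [Set.ncard_univ] at h1
        rw [Nat.card_coe_set_eq]
        omega
      have hcyc' : ¬ (Γ.induce ({v}ᶜ : Set V)).HasOrientedCycle := by
        rintro ⟨m, c, hc1, hc2⟩
        exact hcyc ⟨m, fun i => ((((c i).1 : ↥({v}ᶜ : Set V)) : V), (((c i).2 : ↥({v}ᶜ : Set V)) : V)),
          fun i => hc1 i, fun i => congrArg Subtype.val (hc2 i)⟩
      exact polyFree_of_surjective (TraagDecomp.proj Γ v hv)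
        (TraagDecomp.proj_surjective Γ v hv)
        ⟨TraagDecomp.SS Γ v, ⟨TraagDecomp.kerEquiv Γ v hv⟩⟩
        (ih _ ‹_› _ hcard' hcyc')

open MixedGraph in
/-- If `Γ` is a finite mixed graph without an oriented cycle, then the TRAAG `G_Γ` is
poly-free. -/
theorem TRAAG.polyFree_of_no_orientedCycle {V : Type} [Finite V] (Γ : MixedGraph V)
    (h : ¬ Γ.HasOrientedCycle) : PolyFree (TRAAG Γ) := by
  exact traag_polyfree_aux (Nat.card V) V ‹_› Γ le_rfl h
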